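/- Let G be a connected graph with v1 and v2 adjacent twin vertices (same neighborhoods among other vertices, v1v2 ∈ E) sharing transmission k. Then (k+1)/k is an eigenvalue of the normalized distance Laplacian of G, with eigenvector (1, -1, 0, ..., 0) supported on v1, v2. -/

import Mathlib

/-! The normalized distance Laplacian `M` applied to `e_{v₁} - e_{v₂}` gives the difference of
the columns of `v₁` and `v₂`. Off the pair these columns agree, since twins are equidistant from
every other vertex and carry the same transmission; on the pair the difference is
`1 + d(v₁, v₂) / √(k k) = (k + 1) / k`. -/

open Matrix

namespace Matrix

variable {ι R : Type*} [Fintype ι] [DecidableEq ι] [Ring R]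

theorem mulVec_single_one_sub_single_one (M : Matrix ι ι R) (a b : ι) :
    M *ᵥ (Pi.single a 1 - Pi.single b 1) = fun i => M i a - M i b := by
  rw [mulVec_sub, mulVec_single_one, mulVec_single_one]
  rfl

theorem mulVec_single_one_sub_single_one_eq_smul {M : Matrix ι ι R} {a b : ι} {μ : R}
    (hab : a ≠ b) (hrow : ∀ i, i ≠ a → i ≠ b → M i a = M i b)
    (ha : M a a - M a b = μ) (hb : M b b - M b a = μ) :
    M *ᵥ (Pi.single a 1 - Pi.single b 1) = μ • (Pi.single a 1 - Pi.single b 1) := by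
  rw [mulVec_single_one_sub_single_one]
  funext i
  by_cases hia : i = a
  · subst hia
    simp [hab, ha]
  by_cases hib : i = b
  · subst hib
    simp [hia, ← hb]
  · simp [hia, hib, hrow i hia hib]

end Matrix

theorem stmt7_general {n : ℕ} (G : SimpleGraph (Fin n))
    (v1 v2 : Fin n) (hne : v1 ≠ v2)
    (htwin : ∀ u, u ≠ v1 → u ≠ v2 → G.dist v1 u = G.dist v2 u)
    (hd12 : G.dist v1 v2 = 1)
    (k : ℝ) (hk : 0 < k)
    (t : Fin n → ℝ)
    (ht1 : t v1 = k) (ht2 : t v2 = k)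
    (M : Matrix (Fin n) (Fin n) ℝ)
    (hM : M = Matrix.of fun i j =>
      if i = j then (1 : ℝ) else -(G.dist i j : ℝ) / Real.sqrt (t i * t j))
    (x : Fin n → ℝ)
    (hx : x = fun u => if u = v1 then (1 : ℝ) else if u = v2 then -1 else 0) :
    M *ᵥ x = ((k + 1) / k) • x := by
  have hx' : x = Pi.single v1 1 - Pi.single v2 1 := by
    subst hx
    funext u
    by_cases h1 : u = v1
    · simp [h1, hne]
    · by_cases h2 : u = v2 <;> simp [h1, h2, hne.symm]
  have hgap : 1 - -1 / Real.sqrt (k * k) = (k + 1) / k := by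
    rw [Real.sqrt_mul_self hk.le]; field_simp; ring
  subst hM hx'
  refine mulVec_single_one_sub_single_one_eq_smul hne (fun i h1 h2 => ?_) ?_ ?_
  · simp [h1, h2, G.dist_comm (u := i), htwin i h1 h2, ht1, ht2]
  · simp [hne, hd12, ht1, ht2, hgap]
  · simp [hne.symm, G.dist_comm (u := v2), hd12, ht1, ht2, hgap]

theorem stmt7 {n : ℕ} (G : SimpleGraph (Fin n)) (hG : G.Connected)
    (v1 v2 : Fin n) (hne : v1 ≠ v2) (hadj : G.Adj v1 v2)
    (htwin : ∀ u, u ≠ v1 → u ≠ v2 → G.dist v1 u = G.dist v2 u)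
    (hd12 : G.dist v1 v2 = 1)
    (k : ℝ) (hk : 0 < k)
    (t : Fin n → ℝ) (ht : t = fun i => ∑ j, (G.dist i j : ℝ))
    (ht1 : t v1 = k) (ht2 : t v2 = k)
    (M : Matrix (Fin n) (Fin n) ℝ)
    (hM : M = Matrix.of fun i j =>
      if i = j then (1 : ℝ) else -(G.dist i j : ℝ) / Real.sqrt (t i * t j))
    (x : Fin n → ℝ)
    (hx : x = fun u => if u = v1 then (1 : ℝ) else if u = v2 then -1 else 0) :
    M *ᵥ x = ((k + 1) / k) • x :=
  stmt7_general G v1 v2 hne htwin hd12 k hk t ht1 ht2 M hM x hx
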